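/- arXiv:1601.06113 — 3 statements merged into one kernel-verified Lean document; each statement's English description precedes it below -/
import Mathlib

section
/- Let X_1,...,X_k be finite sets, p_a a product distribution p_a(x_{[k]}) = ∏_j p_a(x_j) on X_1 × ⋯ × X_k, and p_b any distribution whose support is contained in the support of p_a. For λ ∈ [0,1] let p_λ = (1−λ)p_a + λ p_b. Then for every nonempty S ⊆ [k], the total correlation T_λ(S) = ∑_{j∈S} H_λ(X_j) − H_λ(X_S), as a function of λ, has right derivative 0 at λ = 0. -/
open Finset

/-- Shannon entropy of the random variable `f` on the finite probability space `Ω`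
with weights `p`. -/
noncomputable def shEntropy {Ω β : Type*} [Fintype Ω] [DecidableEq β]
    (p : Ω → ℝ) (f : Ω → β) : ℝ :=
  -∑ b ∈ Finset.univ.image f,
      (∑ ω ∈ Finset.univ.filter (fun ω => f ω = b), p ω) *
        Real.log (∑ ω ∈ Finset.univ.filter (fun ω => f ω = b), p ω)

/-- The restriction `x ↦ x_S` of a tuple to the coordinates in `S`. -/
def restrictOn {k : ℕ} {𝒳 : Fin k → Type*} (S : Finset (Fin k)) :
    (∀ j, 𝒳 j) → ∀ j : Fin k, Option (𝒳 j) :=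
  fun x j => if j ∈ S then some (x j) else none

/-!
`T` is in fact differentiable at `0`. The fibre masses of `p_λ` are affine in `λ`, and
`m log m` is differentiable along an affine path unless it starts at `0`, in which case the
support condition makes the path constantly `0`. Hence `H_λ(f)` has derivative
`-∑ₓ (p_b - p_a)(x) (log p_a(f = f x) + 1)` at `0`. For a product `p_a` the mass of the fibre
of `x_S` is `∏_{j ∈ S} q_j(x_j)`, whose logarithm is `∑_{j ∈ S} log q_j(x_j)` wherever
`p_b - p_a` does not vanish, so the derivative of `T` collapses to
`(1 - |S|) ∑ₓ (p_b - p_a)(x) = 0`.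
-/

open Real

lemma hasDerivAt_affine_mul_log {A B : ℝ} (h : A = 0 → B = 0) :
    HasDerivAt (fun l => ((1 - l) * A + l * B) * log ((1 - l) * A + l * B))
      ((B - A) * (log A + 1)) 0 := by
  by_cases hA : A = 0
  · simpa [hA, h hA] using hasDerivAt_const (0 : ℝ) (0 : ℝ)
  have haff : HasDerivAt (fun l : ℝ => (1 - l) * A + l * B) (-1 * A + 1 * B) 0 :=
    (((hasDerivAt_id (0 : ℝ)).const_sub 1).mul_const A).add ((hasDerivAt_id (0 : ℝ)).mul_const B)
  exact ((Real.hasDerivAt_mul_log hA).comp_of_eq 0 haff (by ring)).congr_deriv (by ring)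

section FiberMass

variable {Ω β : Type*} [Fintype Ω] [DecidableEq β]

def fiberMass (p : Ω → ℝ) (f : Ω → β) (b : β) : ℝ :=
  ∑ ω ∈ univ.filter (fun ω => f ω = b), p ω

lemma shEntropy_eq_neg_sum_fiberMass (p : Ω → ℝ) (f : Ω → β) :
    shEntropy p f = -∑ b ∈ univ.image f, fiberMass p f b * log (fiberMass p f b) :=
  rfl

lemma fiberMass_mixture (pa pb : Ω → ℝ) (f : Ω → β) (l : ℝ) (b : β) :
    fiberMass (fun ω => (1 - l) * pa ω + l * pb ω) f b
      = (1 - l) * fiberMass pa f b + l * fiberMass pb f b := by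
  simp only [fiberMass, sum_add_distrib, mul_sum]

lemma fiberMass_sub (p p' : Ω → ℝ) (f : Ω → β) (b : β) :
    fiberMass (fun ω => p ω - p' ω) f b = fiberMass p f b - fiberMass p' f b :=
  sum_sub_distrib ..

lemma fiberMass_eq_zero_of_support {pa pb : Ω → ℝ} (hpa0 : ∀ ω, 0 ≤ pa ω)
    (hsupp : ∀ ω, pa ω = 0 → pb ω = 0) {f : Ω → β} {b : β} (h : fiberMass pa f b = 0) :
    fiberMass pb f b = 0 :=
  sum_eq_zero fun ω hω => hsupp ω ((sum_eq_zero_iff_of_nonneg fun ω _ => hpa0 ω).1 h ω hω)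

lemma sum_image_fiberMass_mul (p : Ω → ℝ) (f : Ω → β) (c : β → ℝ) :
    ∑ b ∈ univ.image f, fiberMass p f b * c b = ∑ ω, p ω * c (f ω) :=
  sum_image' _ fun ω _ => by
    rw [fiberMass, sum_mul]
    exact sum_congr rfl fun ω' hω' => by rw [(mem_filter.1 hω').2]

lemma hasDerivAt_shEntropy_mixture {pa pb : Ω → ℝ} (hpa0 : ∀ ω, 0 ≤ pa ω)
    (hsupp : ∀ ω, pa ω = 0 → pb ω = 0) (f : Ω → β) :
    HasDerivAt (fun l => shEntropy (fun ω => (1 - l) * pa ω + l * pb ω) f)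
      (-∑ ω, (pb ω - pa ω) * (log (fiberMass pa f (f ω)) + 1)) 0 := by
  simp only [shEntropy_eq_neg_sum_fiberMass, fiberMass_mixture]
  rw [← sum_image_fiberMass_mul (fun ω => pb ω - pa ω) f (fun b => log (fiberMass pa f b) + 1)]
  simp only [fiberMass_sub]
  exact (HasDerivAt.fun_sum fun b _ =>
    hasDerivAt_affine_mul_log (fiberMass_eq_zero_of_support hpa0 hsupp)).neg

end FiberMass

lemma fiberMass_prod {ι β : Type*} [Fintype ι] [DecidableEq ι] [DecidableEq β]
    {𝒳 : ι → Type*} [∀ i, Fintype (𝒳 i)]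
    {q : ∀ i, 𝒳 i → ℝ} (hq1 : ∀ i, ∑ y, q i y = 1) {f : (∀ i, 𝒳 i) → β} {S : Finset ι}
    {x : ∀ i, 𝒳 i} (hf : ∀ y, f y = f x ↔ ∀ i ∈ S, y i = x i) :
    fiberMass (fun y => ∏ i, q i (y i)) f (f x) = ∏ i ∈ S, q i (x i) := by
  have hfiber : univ.filter (fun y => f y = f x)
      = Fintype.piFinset fun i => if i ∈ S then {x i} else univ := by
    ext y
    simp only [hf, mem_filter, mem_univ, true_and, Fintype.mem_piFinset]
    refine forall_congr' fun i => ?_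
    split_ifs with hi <;> simp [hi]
  rw [fiberMass, hfiber, ← prod_univ_sum, ← Fintype.prod_ite_mem S fun i => q i (x i)]
  exact prod_congr rfl fun i _ => by split_ifs <;> simp [hq1]

lemma restrictOn_eq_restrictOn_iff {k : ℕ} {𝒳 : Fin k → Type*} {S : Finset (Fin k)}
    {x y : ∀ j, 𝒳 j} : restrictOn S y = restrictOn S x ↔ ∀ j ∈ S, y j = x j := by
  simp only [restrictOn, funext_iff]
  refine forall_congr' fun j => ?_
  split_ifs with hj <;> simp [hj]

lemma sum_mul_log_prod_add_one {ι Ω : Type*} [Fintype Ω] (S : Finset ι) {c : Ω → ℝ}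
    (r : ι → Ω → ℝ) (hc : ∑ ω, c ω = 0) (hc0 : ∀ ω, ∀ i ∈ S, r i ω = 0 → c ω = 0) :
    ∑ ω, c ω * (log (∏ i ∈ S, r i ω) + 1) = ∑ i ∈ S, ∑ ω, c ω * (log (r i ω) + 1) := by
  have hpoint : ∀ ω, c ω * (log (∏ i ∈ S, r i ω) + 1)
      = ∑ i ∈ S, c ω * (log (r i ω) + 1) - (#S - 1) * c ω := by
    intro ω
    by_cases h : ∃ i ∈ S, r i ω = 0
    · obtain ⟨i, hi, h0⟩ := h
      simp [hc0 ω i hi h0]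
    push Not at h
    rw [log_prod h]
    simp only [mul_add, mul_one, sum_add_distrib, ← mul_sum, sum_const, nsmul_eq_mul]
    ring
  rw [sum_congr rfl fun ω _ => hpoint ω, sum_sub_distrib, sum_comm, ← mul_sum, hc, mul_zero,
    sub_zero]

theorem totalCorrelation_mixture_rightDeriv_zero_general
    {k : ℕ} {𝒳 : Fin k → Type*} [∀ j, Fintype (𝒳 j)] [∀ j, DecidableEq (𝒳 j)]
    (q : ∀ j : Fin k, 𝒳 j → ℝ) (hq0 : ∀ j x, 0 ≤ q j x) (hq1 : ∀ j, ∑ x, q j x = 1)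
    (pa : (∀ j, 𝒳 j) → ℝ) (hpa : ∀ x, pa x = ∏ j, q j (x j))
    (pb : (∀ j, 𝒳 j) → ℝ) (hpb1 : ∑ x, pb x = 1)
    (hsupp : ∀ x, pa x = 0 → pb x = 0)
    (S : Finset (Fin k))
    (T : ℝ → ℝ)
    (hT : ∀ l : ℝ, T l =
      (∑ j ∈ S, shEntropy (fun x => (1 - l) * pa x + l * pb x)
          (fun x : ∀ j, 𝒳 j => x j)) -
        shEntropy (fun x => (1 - l) * pa x + l * pb x) (restrictOn S)) :
    Filter.Tendsto (fun l : ℝ => (T l - T 0) / l)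
      (nhdsWithin 0 (Set.Ioi 0)) (nhds 0) := by
  obtain rfl : pa = fun x => ∏ j, q j (x j) := funext hpa
  have hpa0 (x : ∀ j, 𝒳 j) : 0 ≤ ∏ j, q j (x j) := prod_nonneg fun j _ => hq0 j (x j)
  have hsum : ∑ x, (pb x - ∏ j, q j (x j)) = 0 := by
    rw [sum_sub_distrib, hpb1, ← Fintype.prod_sum, prod_eq_one fun j _ => hq1 j, sub_self]
  have hmarg_coord (j) (x : ∀ j, 𝒳 j) :
      fiberMass (fun y => ∏ i, q i (y i)) (fun y : ∀ j, 𝒳 j => y j) (x j) = q j (x j) := by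
    simpa using fiberMass_prod hq1 (f := fun y => y j) (S := {j}) (x := x) (by simp)
  have hmarg_joint (x : ∀ j, 𝒳 j) :
      fiberMass (fun y => ∏ i, q i (y i)) (restrictOn S) (restrictOn S x) = ∏ j ∈ S, q j (x j) :=
    fiberMass_prod hq1 fun _ => restrictOn_eq_restrictOn_iff
  have hderiv : HasDerivAt T 0 0 := by
    rw [funext hT]
    refine ((HasDerivAt.fun_sum fun j _ => hasDerivAt_shEntropy_mixture hpa0 hsupp
      fun x : ∀ j, 𝒳 j => x j).fun_sub
        (hasDerivAt_shEntropy_mixture hpa0 hsupp (restrictOn S))).congr_deriv ?_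
    simp only [hmarg_coord, hmarg_joint, sum_neg_distrib]
    rw [sum_mul_log_prod_add_one S (fun j x => q j (x j)) hsum fun x j _ hj => ?_, sub_self]
    have h0 : ∏ j, q j (x j) = 0 := prod_eq_zero (mem_univ j) hj
    rw [hsupp x h0, h0, sub_zero]
  simpa [div_eq_inv_mul] using hderiv.tendsto_slope_zero_right

/-- Let `p_a` be a product distribution on `𝒳_1 × ⋯ × 𝒳_k`, `p_b` a distribution
whose support is contained in that of `p_a`, and `p_λ = (1-λ)p_a + λ p_b`.  Then
for every nonempty `S ⊆ [k]`, the total correlation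
`T_λ(S) = ∑_{j∈S} H_λ(X_j) - H_λ(X_S)` has right derivative `0` at `λ = 0`. -/
theorem totalCorrelation_mixture_rightDeriv_zero
    {k : ℕ} {𝒳 : Fin k → Type*} [∀ j, Fintype (𝒳 j)] [∀ j, DecidableEq (𝒳 j)]
    (q : ∀ j : Fin k, 𝒳 j → ℝ) (hq0 : ∀ j x, 0 ≤ q j x) (hq1 : ∀ j, ∑ x, q j x = 1)
    (pa : (∀ j, 𝒳 j) → ℝ) (hpa : ∀ x, pa x = ∏ j, q j (x j))
    (pb : (∀ j, 𝒳 j) → ℝ) (hpb0 : ∀ x, 0 ≤ pb x) (hpb1 : ∑ x, pb x = 1)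
    (hsupp : ∀ x, pa x = 0 → pb x = 0)
    (S : Finset (Fin k)) (hS : S.Nonempty)
    (T : ℝ → ℝ)
    (hT : ∀ l : ℝ, T l =
      (∑ j ∈ S, shEntropy (fun x => (1 - l) * pa x + l * pb x)
          (fun x : ∀ j, 𝒳 j => x j)) -
        shEntropy (fun x => (1 - l) * pa x + l * pb x) (restrictOn S)) :
    Filter.Tendsto (fun l : ℝ => (T l - T 0) / l)
      (nhdsWithin 0 (Set.Ioi 0)) (nhds 0) :=
  totalCorrelation_mixture_rightDeriv_zero_general q hq0 hq1 pa hpa pb hpb1 hsupp S T hT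
end

section
/- Let X be a real random variable whose moment generating function M(t) = E[e^{tX}] is finite on an interval (−t_1, t_1) with t_1 > 0, and let a > E[X]. Then inf_{t ∈ (0,t_1)} (ln M(t) − t a) < 0. -/
open MeasureTheory ProbabilityTheory

lemma exp_le_quad (u : ℝ) : Real.exp u ≤ 1 + u + u ^ 2 * Real.exp |u| := by
  have h1 : (1:ℝ) ≤ Real.exp |u| := Real.one_le_exp (abs_nonneg u)
  rcases le_or_gt |u| 1 with h | h
  · have := Real.exp_bound h (n := 2) (by norm_num)
    have h2 : |Real.exp u - (1 + u)| ≤ |u| ^ 2 * (3 / (2 * 2)) := by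
      simpa [Finset.sum_range_succ] using this
    have h3 := (abs_sub_le_iff.1 h2).1
    have : |u| ^ 2 = u ^ 2 := sq_abs u
    nlinarith [sq_nonneg u]
  · rcases le_or_gt u 0 with hu | hu
    · have h4 : Real.exp u ≤ 1 := Real.exp_le_one_iff.2 hu
      have h5 : |u| = -u := abs_of_nonpos hu
      nlinarith [Real.exp_pos u]
    · have h5 : |u| = u := abs_of_pos hu
      rw [h5]
      have h6 : 1 ≤ u ^ 2 := by nlinarith [abs_of_pos hu ▸ h]
      nlinarith [Real.exp_pos u, hu]

set_option maxHeartbeats 1000000 in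
/-- If the moment generating function `M(t) = E[e^{tX}]` of a real random variable
`X` is finite on `(-t₁, t₁)` and `a > E[X]`, then
`inf_{t ∈ (0,t₁)} (ln M(t) - t a) < 0`. -/
theorem legendre_inf_neg {Ω : Type*} [MeasurableSpace Ω] (μ : Measure Ω)
    [IsProbabilityMeasure μ] (X : Ω → ℝ) (hXm : Measurable X)
    (hXint : Integrable X μ)
    (t₁ : ℝ) (ht₁ : 0 < t₁)
    (hmgf : ∀ t ∈ Set.Ioo (-t₁) t₁, Integrable (fun ω => Real.exp (t * X ω)) μ)
    (a : ℝ) (ha : (∫ ω, X ω ∂μ) < a) :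
    sInf ((fun t => Real.log (mgf X μ t) - t * a) '' Set.Ioo 0 t₁) < 0 := by
  set m := ∫ ω, X ω ∂μ with hm
  set c : ℝ := 3 * t₁ / 4 with hc
  have hcmem : c ∈ Set.Ioo (-t₁) t₁ := by constructor <;> [linarith; linarith]
  have hcmem' : -c ∈ Set.Ioo (-t₁) t₁ := by constructor <;> [linarith; linarith]
  set K : ℝ := 8 / t₁ ^ 2 with hK
  have hKpos : 0 < K := by positivity
  set D : ℝ := K * (mgf X μ c + mgf X μ (-c)) + 1 with hD
  have hmgfc := hmgf c hcmem
  have hmgfc' := hmgf (-c) hcmem'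
  have hDpos : 0 < D := by
    have := mgf_nonneg (X := X) (μ := μ) (t := c)
    have := mgf_nonneg (X := X) (μ := μ) (t := -c)
    nlinarith
  -- key upper bound on mgf for small positive t
  have key : ∀ t : ℝ, 0 < t → t ≤ t₁ / 4 → mgf X μ t ≤ 1 + t * m + D * t ^ 2 := by
    intro t ht ht4
    have htmem : t ∈ Set.Ioo (-t₁) t₁ := ⟨by linarith, by linarith⟩
    have hptw : ∀ ω, Real.exp (t * X ω) ≤
        1 + t * X ω + K * t ^ 2 * (Real.exp (c * X ω) + Real.exp (-c * X ω)) := by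
      intro ω
      set x := X ω
      have h1 := exp_le_quad (t * x)
      have habs : |t * x| = t * |x| := by
        rw [abs_mul, abs_of_pos ht]
      have hx2 : x ^ 2 ≤ 8 / t₁ ^ 2 * Real.exp (t₁ / 2 * |x|) := by
        have hq := Real.quadratic_le_exp_of_nonneg
          (x := t₁ / 2 * |x|) (by positivity)
        rw [div_mul_eq_mul_div, le_div_iff₀ (by positivity)]
        nlinarith [abs_nonneg x, sq_abs x]
      have hmul : (t * x) ^ 2 * Real.exp |t * x|
          ≤ K * t ^ 2 * Real.exp ((t₁ / 2 + t) * |x|) := by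
        rw [habs, mul_pow]
        have h7 := mul_le_mul_of_nonneg_left hx2 (sq_nonneg t)
        have h8 := mul_le_mul_of_nonneg_right h7 (Real.exp_pos (t * |x|)).le
        calc t ^ 2 * x ^ 2 * Real.exp (t * |x|)
            ≤ t ^ 2 * (8 / t₁ ^ 2 * Real.exp (t₁ / 2 * |x|)) * Real.exp (t * |x|) := h8
          _ = K * t ^ 2 * Real.exp ((t₁ / 2 + t) * |x|) := by
              have h9 : Real.exp ((t₁ / 2 + t) * |x|)
                  = Real.exp (t₁ / 2 * |x|) * Real.exp (t * |x|) := by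
                rw [← Real.exp_add]; ring_nf
              rw [h9, hK]; ring
      have hcle : Real.exp ((t₁ / 2 + t) * |x|) ≤ Real.exp (c * |x|) := by
        apply Real.exp_le_exp.2
        have : t₁ / 2 + t ≤ c := by rw [hc]; linarith
        nlinarith [abs_nonneg x]
      have hsum : Real.exp (c * |x|) ≤ Real.exp (c * x) + Real.exp (-c * x) := by
        rcases abs_cases x with ⟨h, _⟩ | ⟨h, _⟩
        · rw [h]; nlinarith [Real.exp_pos (-c * x)]
        · rw [h, mul_neg, ← neg_mul]; nlinarith [Real.exp_pos (c * x)]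
      have hKt : 0 ≤ K * t ^ 2 := by positivity
      nlinarith [mul_le_mul_of_nonneg_left hsum hKt,
        mul_le_mul_of_nonneg_left hcle hKt]
    have hInt1 : Integrable (fun ω => Real.exp (t * X ω)) μ := hmgf t htmem
    have hIa : Integrable (fun ω => 1 + t * X ω) μ :=
      (integrable_const (1:ℝ)).add (hXint.const_mul t)
    have hIb : Integrable
        (fun ω => K * t ^ 2 * (Real.exp (c * X ω) + Real.exp (-c * X ω))) μ :=
      (hmgfc.add hmgfc').const_mul (K * t ^ 2)
    have hInt2 : Integrable (fun ω =>
        1 + t * X ω + K * t ^ 2 * (Real.exp (c * X ω) + Real.exp (-c * X ω))) μ :=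
      hIa.add hIb
    have hmono := integral_mono hInt1 hInt2 hptw
    have heq : (∫ ω, (1 + t * X ω + K * t ^ 2 *
        (Real.exp (c * X ω) + Real.exp (-c * X ω))) ∂μ)
        = 1 + t * m + K * t ^ 2 * (mgf X μ c + mgf X μ (-c)) := by
      rw [integral_add hIa hIb,
        integral_add (integrable_const (1:ℝ)) (hXint.const_mul t),
        integral_const, integral_const_mul, integral_const_mul,
        integral_add hmgfc hmgfc']
      simp [mgf, hm]
    rw [heq] at hmono
    calc mgf X μ t ≤ 1 + t * m + K * t ^ 2 * (mgf X μ c + mgf X μ (-c)) := hmono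
      _ ≤ 1 + t * m + D * t ^ 2 := by nlinarith [sq_nonneg t]
  -- Jensen lower bound : t * m ≤ log (mgf X μ t)
  have jensen : ∀ t ∈ Set.Ioo (-t₁) t₁, t * m ≤ Real.log (mgf X μ t) := by
    intro t htmem
    have hInt := hmgf t htmem
    have hpos : 0 < mgf X μ t := mgf_pos hInt
    have hj : Real.exp (∫ ω, t * X ω ∂μ) ≤ ∫ ω, Real.exp (t * X ω) ∂μ := by
      refine convexOn_exp.map_integral_le Real.continuous_exp.continuousOn
        isClosed_univ ?_ (hXint.const_mul t) ?_
      · exact Filter.Eventually.of_forall fun _ => Set.mem_univ _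
      · exact hInt
    rw [integral_const_mul] at hj
    have : Real.exp (t * m) ≤ mgf X μ t := hj
    calc t * m = Real.log (Real.exp (t * m)) := (Real.log_exp _).symm
      _ ≤ Real.log (mgf X μ t) := Real.log_le_log (Real.exp_pos _) this
  -- pick the witness t₀
  set t₀ : ℝ := min (t₁ / 4) ((a - m) / (2 * D)) with ht₀
  have ht₀pos : 0 < t₀ := lt_min (by linarith) (div_pos (by linarith) (by linarith))
  have ht₀le : t₀ ≤ t₁ / 4 := min_le_left _ _
  have ht₀le2 : t₀ ≤ (a - m) / (2 * D) := min_le_right _ _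
  have ht₀mem : t₀ ∈ Set.Ioo 0 t₁ := ⟨ht₀pos, by linarith⟩
  have hval : Real.log (mgf X μ t₀) - t₀ * a < 0 := by
    have h1 := key t₀ ht₀pos ht₀le
    have hposm : 0 < mgf X μ t₀ := mgf_pos (hmgf t₀ ⟨by linarith, by linarith⟩)
    have hlog : Real.log (mgf X μ t₀) ≤ mgf X μ t₀ - 1 :=
      Real.log_le_sub_one_of_pos hposm
    have hDne : D ≠ 0 := hDpos.ne'
    have hDt : D * t₀ ≤ (a - m) / 2 := by
      have h2 := mul_le_mul_of_nonneg_left ht₀le2 hDpos.le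
      have h3 : D * ((a - m) / (2 * D)) = (a - m) / 2 := by
        field_simp
      linarith
    have h4 : D * t₀ ^ 2 ≤ (a - m) / 2 * t₀ := by
      have := mul_le_mul_of_nonneg_right hDt ht₀pos.le
      nlinarith
    nlinarith [mul_pos ht₀pos (show (0:ℝ) < a - m by linarith)]
  have hne : ((fun t => Real.log (mgf X μ t) - t * a) '' Set.Ioo 0 t₁).Nonempty :=
    ⟨_, Set.mem_image_of_mem _ ht₀mem⟩
  have hbdd : BddBelow ((fun t => Real.log (mgf X μ t) - t * a) '' Set.Ioo 0 t₁) := by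
    refine ⟨t₁ * (m - a), ?_⟩
    rintro y ⟨t, ⟨ht0, htlt⟩, rfl⟩
    have hj := jensen t ⟨by linarith, htlt⟩
    have h5 : t₁ * (m - a) ≤ t * (m - a) := by nlinarith
    show t₁ * (m - a) ≤ Real.log (mgf X μ t) - t * a
    nlinarith
  calc sInf ((fun t => Real.log (mgf X μ t) - t * a) '' Set.Ioo 0 t₁)
      ≤ Real.log (mgf X μ t₀) - t₀ * a := csInf_le hbdd (Set.mem_image_of_mem _ ht₀mem)
    _ < 0 := hval
end

section
/- For the two-user Gaussian MAC with SNRs γ_1, γ_2 > 0, define for C ≥ 0 and α ∈ [0, 1/2] the function L_α(C) = (α/2) log(1 + 2ρ_0 √(γ_1 γ_2)/(1+γ_1+γ_2)) + ((1−2α)/2) log(1 − ρ_0² γ_2/(1+γ_2)) − C, where ρ_0 = sqrt(1 − 2^{−4C}). Then as C → 0⁺, L_α(C) = α · (2 √(γ_1 γ_2 · log e)/(1+γ_1+γ_2)) · √C + o(√C). In particular for α ∈ (0, 1/2], L_α(C)/√C → α · 2√(γ_1 γ_2 log e)/(1+γ_1+γ_2) > 0, so the right derivative of L_α at 0 is +∞.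 -/
open Filter

/-- The correlation coefficient `ρ₀(C) = √(1 - 2^{-4C})`. -/
noncomputable def rho0 (C : ℝ) : ℝ := Real.sqrt (1 - (2 : ℝ) ^ (-(4 * C)))

/-- The achievable weighted-sum-rate gain for the two-user Gaussian MAC:
`L_α(C) = (α/2) log(1 + 2ρ₀√(γ₁γ₂)/(1+γ₁+γ₂))
          + ((1-2α)/2) log(1 - ρ₀² γ₂/(1+γ₂)) - C` (base-2 logarithms). -/
noncomputable def Lgain (γ₁ γ₂ α C : ℝ) : ℝ :=
  (α / 2) * Real.logb 2 (1 + 2 * rho0 C * Real.sqrt (γ₁ * γ₂) / (1 + γ₁ + γ₂)) +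
    ((1 - 2 * α) / 2) * Real.logb 2 (1 - (rho0 C) ^ 2 * γ₂ / (1 + γ₂)) - C

open Topology Real

/-! ρ₀² = 1 - 2^{-4C} has slope 4 ln 2 at 0, so ρ₀ ~ 2√(C ln 2). Each logarithm is
`logb 2 (1 + k x) ~ k x / ln 2` with `x = ρ₀` in the first term and `x = ρ₀²` in the second;
hence only the first term is of order √C, while the second term and `C` are `O(C) = o(√C)`. -/

lemma tendsto_sqrt_nhdsGT_zero : Tendsto (fun x : ℝ => √x) (𝓝[>] 0) (𝓝 0) := by
  simpa using (continuous_sqrt.tendsto 0).mono_left nhdsWithin_le_nhds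

lemma HasDerivAt.tendsto_div_nhdsNE_zero {f : ℝ → ℝ} {d : ℝ} (hf : HasDerivAt f d 0)
    (h0 : f 0 = 0) : Tendsto (fun x => f x / x) (𝓝[≠] 0) (𝓝 d) :=
  (hasDerivAt_iff_tendsto_slope.mp hf).congr fun x => by simp [slope_def_field, h0]

lemma hasDerivAt_logb_one_add_mul (b k : ℝ) :
    HasDerivAt (fun x => logb b (1 + k * x)) (k / log b) 0 := by
  have h : HasDerivAt (fun x => 1 + k * x) k 0 := by
    simpa using ((hasDerivAt_id (0 : ℝ)).const_mul k).const_add 1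
  simpa [logb] using (h.log (by norm_num)).div_const (log b)

lemma Filter.Tendsto.logb_one_add_mul_div {ι : Type*} {l : Filter ι} {g : ι → ℝ}
    (hg : Tendsto g l (𝓝[≠] 0)) (b k : ℝ) :
    Tendsto (fun i => Real.logb b (1 + k * g i) / g i) l (𝓝 (k / Real.log b)) :=
  ((hasDerivAt_logb_one_add_mul b k).tendsto_div_nhdsNE_zero (by simp)).comp hg

lemma hasDerivAt_one_sub_two_rpow_neg_four_mul :
    HasDerivAt (fun C : ℝ => 1 - (2 : ℝ) ^ (-(4 * C))) (4 * log 2) 0 := by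
  have h : HasDerivAt (fun C : ℝ => -(4 * C)) (-4) 0 := by
    simpa using ((hasDerivAt_id (0 : ℝ)).const_mul 4).fun_neg
  exact ((h.const_rpow two_pos).const_sub 1).congr_deriv (by simp [mul_comm])

lemma rho0_pos {C : ℝ} (hC : 0 < C) : 0 < rho0 C :=
  sqrt_pos.mpr (sub_pos.mpr (rpow_lt_one_of_one_lt_of_neg one_lt_two (by linarith)))

lemma tendsto_rho0_div_sqrt :
    Tendsto (fun C => rho0 C / √C) (𝓝[>] 0) (𝓝 (2 * √(log 2))) := by
  have hslope := (hasDerivAt_one_sub_two_rpow_neg_four_mul.tendsto_div_nhdsNE_zero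
    (by simp)).mono_left (nhdsGT_le_nhdsNE 0)
  have h4 : √(4 * log 2) = 2 * √(log 2) := by
    rw [sqrt_mul zero_le_four, show (4 : ℝ) = 2 ^ 2 by norm_num, sqrt_sq zero_le_two]
  rw [← h4]
  refine ((continuous_sqrt.tendsto _).comp hslope).congr' ?_
  filter_upwards [self_mem_nhdsWithin] with C hC
  exact sqrt_div' _ (le_of_lt hC)

lemma tendsto_rho0_nhdsGT : Tendsto rho0 (𝓝[>] 0) (𝓝[>] 0) := by
  have h := tendsto_rho0_div_sqrt.mul tendsto_sqrt_nhdsGT_zero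
  rw [mul_zero] at h
  refine tendsto_nhdsWithin_iff.mpr ⟨h.congr' ?_, ?_⟩
  · filter_upwards [self_mem_nhdsWithin] with C hC
    exact div_mul_cancel₀ _ (sqrt_pos.mpr hC).ne'
  · filter_upwards [self_mem_nhdsWithin] with C hC using rho0_pos hC

lemma tendsto_rho0_sq_nhdsGT : Tendsto (fun C => rho0 C ^ 2) (𝓝[>] 0) (𝓝[>] 0) := by
  refine tendsto_nhdsWithin_iff.mpr ⟨?_, ?_⟩
  · simpa using (tendsto_rho0_nhdsGT.mono_right nhdsWithin_le_nhds).pow 2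
  · filter_upwards [self_mem_nhdsWithin] with C hC using pow_pos (rho0_pos hC) 2

lemma tendsto_rho0_sq_div_sqrt : Tendsto (fun C => rho0 C ^ 2 / √C) (𝓝[>] 0) (𝓝 0) := by
  have h := tendsto_rho0_div_sqrt.mul (tendsto_rho0_nhdsGT.mono_right nhdsWithin_le_nhds)
  rw [mul_zero] at h
  exact h.congr fun C => by ring

lemma Lgain_div_sqrt_eq (γ₁ γ₂ α : ℝ) {C : ℝ} (hC : 0 < C) :
    Lgain γ₁ γ₂ α C / √C =
      α / 2 * (logb 2 (1 + 2 * √(γ₁ * γ₂) / (1 + γ₁ + γ₂) * rho0 C) / rho0 C *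
          (rho0 C / √C)) +
        (1 - 2 * α) / 2 * (logb 2 (1 + -(γ₂ / (1 + γ₂)) * rho0 C ^ 2) / rho0 C ^ 2 *
          (rho0 C ^ 2 / √C)) - √C := by
  have hρ := (rho0_pos hC).ne'
  have hsqrt := (sqrt_pos.mpr hC).ne'
  rw [Lgain, show 1 + 2 * rho0 C * √(γ₁ * γ₂) / (1 + γ₁ + γ₂) =
      1 + 2 * √(γ₁ * γ₂) / (1 + γ₁ + γ₂) * rho0 C by ring,
    show 1 - rho0 C ^ 2 * γ₂ / (1 + γ₂) = 1 + -(γ₂ / (1 + γ₂)) * rho0 C ^ 2 by ring]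
  generalize logb 2 (1 + 2 * √(γ₁ * γ₂) / (1 + γ₁ + γ₂) * rho0 C) = L₁
  generalize logb 2 (1 + -(γ₂ / (1 + γ₂)) * rho0 C ^ 2) = L₂
  field_simp
  rw [sq_sqrt hC.le]

theorem Lgain_sqrt_asymptotics_general (γ₁ γ₂ : ℝ) (hγ₁ : 0 < γ₁) (hγ₂ : 0 < γ₂)
    (α : ℝ) :
    Tendsto (fun C : ℝ => Lgain γ₁ γ₂ α C / Real.sqrt C)
        (nhdsWithin 0 (Set.Ioi 0))
        (nhds (α * (2 * Real.sqrt (γ₁ * γ₂ * (Real.log 2)⁻¹) / (1 + γ₁ + γ₂)))) ∧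
      (0 < α →
        0 < α * (2 * Real.sqrt (γ₁ * γ₂ * (Real.log 2)⁻¹) / (1 + γ₁ + γ₂))) := by
  refine ⟨?_, fun hα => by positivity⟩
  have hρ := tendsto_rho0_nhdsGT.mono_right (nhdsGT_le_nhdsNE 0)
  have hρ2 := tendsto_rho0_sq_nhdsGT.mono_right (nhdsGT_le_nhdsNE 0)
  have h1 := (hρ.logb_one_add_mul_div 2 (2 * √(γ₁ * γ₂) / (1 + γ₁ + γ₂))).mul
    tendsto_rho0_div_sqrt
  have h2 := (hρ2.logb_one_add_mul_div 2 (-(γ₂ / (1 + γ₂)))).mul tendsto_rho0_sq_div_sqrt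
  refine Tendsto.congr'
    (eventually_mem_nhdsWithin.mono fun C hC => (Lgain_div_sqrt_eq γ₁ γ₂ α hC).symm) ?_
  convert ((h1.const_mul (α / 2)).add (h2.const_mul ((1 - 2 * α) / 2))).sub
    tendsto_sqrt_nhdsGT_zero using 2
  rw [sqrt_mul' _ (inv_nonneg.mpr (log_pos one_lt_two).le), sqrt_inv, mul_zero, mul_zero,
    add_zero, sub_zero]
  field_simp
  rw [sq_sqrt (log_pos one_lt_two).le]

/-- For SNRs `γ₁, γ₂ > 0` and `α ∈ [0, 1/2]`, as `C → 0⁺`,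
`L_α(C) = α · (2√(γ₁γ₂·log e)/(1+γ₁+γ₂))·√C + o(√C)` (with `log e = 1/ln 2`);
in particular for `α ∈ (0,1/2]` the limit of `L_α(C)/√C` is positive, so the right
derivative of `L_α` at `0` is `+∞`. -/
theorem Lgain_sqrt_asymptotics (γ₁ γ₂ : ℝ) (hγ₁ : 0 < γ₁) (hγ₂ : 0 < γ₂)
    (α : ℝ) (hα : α ∈ Set.Icc (0 : ℝ) (1 / 2)) :
    Tendsto (fun C : ℝ => Lgain γ₁ γ₂ α C / Real.sqrt C)
        (nhdsWithin 0 (Set.Ioi 0))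
        (nhds (α * (2 * Real.sqrt (γ₁ * γ₂ * (Real.log 2)⁻¹) / (1 + γ₁ + γ₂)))) ∧
      (0 < α →
        0 < α * (2 * Real.sqrt (γ₁ * γ₂ * (Real.log 2)⁻¹) / (1 + γ₁ + γ₂))) :=
  Lgain_sqrt_asymptotics_general γ₁ γ₂ hγ₁ hγ₂ α
end
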